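/- For any monoid S, the group Out(_S𝒜⁰) = Aut(_S𝒜⁰)/Int(_S𝒜⁰) of outer automorphisms of the category _S𝒜⁰ of finitely generated free left S-acts is isomorphic to the group Out(S) = Aut(S)/Int(S) of outer automorphisms of the monoid S. -/

import Mathlib

open CategoryTheory

/-- `f : S × X → S × Y` is a homomorphism of free left `S`-acts, where the action of
`S` on `S × X` is `s • (t, x) = (s * t, x)`. -/
def IsActHom (S : Type) [Monoid S] {X Y : Type} (f : S × X → S × Y) : Prop :=
  ∀ (s : S) (p : S × X), f (s * p.1, p.2) = (s * (f p).1, (f p).2)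

/-- Objects of the category `_S𝒜⁰` of finitely generated free left `S`-acts:
the free `S`-act on a finite set `X`, with carrier `S × X`. -/
structure FreeAct (S : Type) [Monoid S] : Type 1 where
  X : Type
  finX : Finite X

/-- The category `_S𝒜⁰`: morphisms are the `S`-equivariant maps. -/
instance (S : Type) [Monoid S] : Category (FreeAct S) where
  Hom A B := {f : S × A.X → S × B.X // IsActHom S f}
  id A := ⟨fun p => p, fun _ _ => rfl⟩
  comp f g := ⟨fun p => g.1 (f.1 p), fun s p => by
    show g.1 (f.1 (s * p.1, p.2)) = _; rw [f.2 s p]; exact g.2 s (f.1 p)⟩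

/-- An automorphism of a category `C`: a functor `C ⥤ C` together with a strict
two-sided inverse functor. -/
structure CatAut (C : Type*) [Category C] where
  toFunctor : C ⥤ C
  invFunctor : C ⥤ C
  comp_inv : toFunctor ⋙ invFunctor = 𝟭 C
  inv_comp : invFunctor ⋙ toFunctor = 𝟭 C

namespace CatAut

variable {C : Type*} [Category C]

@[ext] lemma ext {a b : CatAut C} (h1 : a.toFunctor = b.toFunctor)
    (h2 : a.invFunctor = b.invFunctor) : a = b := by
  cases a; cases b; simp_all

/-- The group of automorphisms of a category, under composition of functors. -/
instance : Group (CatAut C) where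
  mul a b := ⟨a.toFunctor ⋙ b.toFunctor, b.invFunctor ⋙ a.invFunctor, by
      show a.toFunctor ⋙ (b.toFunctor ⋙ b.invFunctor) ⋙ a.invFunctor = 𝟭 C
      rw [b.comp_inv, Functor.id_comp, a.comp_inv], by
      show b.invFunctor ⋙ (a.invFunctor ⋙ a.toFunctor) ⋙ b.toFunctor = 𝟭 C
      rw [a.inv_comp, Functor.id_comp, b.inv_comp]⟩
  one := ⟨𝟭 C, 𝟭 C, Functor.id_comp _, Functor.id_comp _⟩
  inv a := ⟨a.invFunctor, a.toFunctor, a.inv_comp, a.comp_inv⟩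
  mul_assoc a b c := ext rfl rfl
  one_mul a := ext (Functor.id_comp _) (Functor.comp_id _)
  mul_one a := ext (Functor.comp_id _) (Functor.id_comp _)
  inv_mul_cancel a := ext a.inv_comp a.inv_comp

lemma mul_toFunctor (a b : CatAut C) : (a * b).toFunctor = a.toFunctor ⋙ b.toFunctor := rfl
lemma inv_toFunctor (a : CatAut C) : (a⁻¹).toFunctor = a.invFunctor := rfl
lemma one_toFunctor : (1 : CatAut C).toFunctor = 𝟭 C := rfl

/-- The (normal) subgroup of inner automorphisms of a category: those automorphisms
that are naturally isomorphic to the identity functor. -/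
def innerSubgroup (C : Type*) [Category C] : Subgroup (CatAut C) where
  carrier := {a | Nonempty (a.toFunctor ≅ 𝟭 C)}
  one_mem' := ⟨Iso.refl _⟩
  mul_mem' := by
    rintro a b ⟨ea⟩ ⟨eb⟩
    exact ⟨Functor.isoWhiskerRight ea b.toFunctor ≪≫ b.toFunctor.leftUnitor ≪≫ eb⟩
  inv_mem' := by
    rintro a ⟨ea⟩
    exact ⟨a.invFunctor.rightUnitor.symm ≪≫ (Functor.isoWhiskerLeft a.invFunctor ea).symm ≪≫
      eqToIso a.inv_comp⟩

instance : (innerSubgroup C).Normal := by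
  constructor
  rintro i ⟨e⟩ a
  refine ⟨?_⟩
  show ((a.toFunctor ⋙ i.toFunctor) ⋙ a.invFunctor) ≅ 𝟭 C
  exact (Functor.associator _ _ _) ≪≫ Functor.isoWhiskerLeft a.toFunctor (Functor.isoWhiskerRight e a.invFunctor)
    ≪≫ Functor.isoWhiskerLeft a.toFunctor a.invFunctor.leftUnitor ≪≫ eqToIso a.comp_inv

end CatAut

/-- Conjugation by a unit, as a monoid automorphism of a monoid `S`. -/
def conjUnit (S : Type) [Monoid S] (u : Sˣ) : MulAut S where
  toFun s := u * s * ↑u⁻¹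
  invFun s := ↑u⁻¹ * s * u
  left_inv s := by simp [mul_assoc]
  right_inv s := by simp [mul_assoc]
  map_mul' s t := by simp [mul_assoc]

/-- The group homomorphism `Sˣ →* MulAut S` given by conjugation. -/
def conjHom (S : Type) [Monoid S] : Sˣ →* MulAut S where
  toFun := conjUnit S
  map_one' := by
    ext s; simp [conjUnit]
  map_mul' u v := by
    ext s; simp [conjUnit, mul_assoc]

/-- The subgroup of inner automorphisms of a monoid `S`: conjugations by units. -/
def innerMonSubgroup (S : Type) [Monoid S] : Subgroup (MulAut S) := (conjHom S).range

instance (S : Type) [Monoid S] : (innerMonSubgroup S).Normal := by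
  constructor
  rintro i ⟨u, rfl⟩ σ
  refine ⟨Units.map σ.toMonoidHom u, ?_⟩
  ext s
  show σ.toMonoidHom u * s * ↑((Units.map σ.toMonoidHom) u)⁻¹ = σ ((conjUnit S u) (σ⁻¹ s))
  rw [Units.coe_map_inv]
  simp only [conjUnit, MulEquiv.coe_mk, Equiv.coe_fn_mk, map_mul, MulEquiv.toMonoidHom_eq_coe,
    MonoidHom.coe_coe]
  rw [MulAut.apply_inv_self]

/-!
A monoid automorphism `σ` of `S` acts on the category by `twist σ`, which applies `σ` to the
coefficients of morphisms. It is naturally isomorphic to the identity exactly when `σ` is inner: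
a natural isomorphism is right multiplication by a unit `u` with `σ c * u = u * c`.

Conversely every autoequivalence `F` is naturally isomorphic to some `twist σ`. The objects that
are retracts of the regular act `S` are those on one generator, and `S` is a retract of every
object with a generator; hence `F S`, a retract of `F (F⁻¹ S) ≅ S`, is isomorphic to `S`, and
`σ` is read off from the action of `F` on `End S ≅ Sᵐᵒᵖ`. So `σ ↦ twist σ⁻¹` induces a
surjection `Aut(S) → Out(_S𝒜⁰)` with kernel `Int(S)`.
-/

namespace CatAut

variable {C : Type*} [Category C]

def toEquivalence (a : CatAut C) : C ≌ C :=
  .mk a.toFunctor a.invFunctor (eqToIso a.comp_inv.symm) (eqToIso a.inv_comp)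

lemma mk_eq_mk_of_iso {a b : CatAut C} (e : a.toFunctor ≅ b.toFunctor) :
    (a : CatAut C ⧸ innerSubgroup C) = b :=
  QuotientGroup.eq.2 ⟨a.invFunctor.isoWhiskerLeft e.symm ≪≫ eqToIso a.inv_comp⟩

end CatAut

namespace FreeAct

variable {S : Type} [Monoid S]

@[ext] lemma hom_ext {A B : FreeAct S} {f g : A ⟶ B} (h : ∀ p, f.1 p = g.1 p) : f = g :=
  Subtype.ext (funext h)

@[simp] lemma id_apply (A : FreeAct S) (p : S × A.X) : (𝟙 A : A ⟶ A).1 p = p := rfl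

@[simp] lemma comp_apply {A B C : FreeAct S} (f : A ⟶ B) (g : B ⟶ C) (p : S × A.X) :
    (f ≫ g).1 p = g.1 (f.1 p) := rfl

lemma apply_eq {A B : FreeAct S} (f : A ⟶ B) (t : S) (x : A.X) :
    f.1 (t, x) = (t * (f.1 (1, x)).1, (f.1 (1, x)).2) := by
  simpa using f.2 t (1, x)

lemma isIso_of_bijective {A B : FreeAct S} (f : A ⟶ B) (hf : Function.Bijective f.1) :
    IsIso f := by
  obtain ⟨g, hgf, hfg⟩ := Function.bijective_iff_has_inverse.1 hf
  have hg : IsActHom S g := fun s q => hf.1 <| by rw [hfg, f.2, hfg]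
  exact ⟨⟨g, hg⟩, hom_ext hgf, hom_ext hfg⟩

def isoOfEquiv {A B : FreeAct S} (e : A.X ≃ B.X) : A ≅ B where
  hom := ⟨fun p => (p.1, e p.2), fun _ _ => rfl⟩
  inv := ⟨fun p => (p.1, e.symm p.2), fun _ _ => rfl⟩
  hom_inv_id := by ext p <;> simp
  inv_hom_id := by ext p <;> simp

def rightMul (A : FreeAct S) (s : S) : A ⟶ A :=
  ⟨fun p => (p.1 * s, p.2), fun _ _ => by simp [mul_assoc]⟩

@[simp] lemma rightMul_apply (A : FreeAct S) (s : S) (p : S × A.X) :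
    (rightMul A s).1 p = (p.1 * s, p.2) := rfl

lemma rightMul_comp_rightMul (A : FreeAct S) (s t : S) :
    rightMul A s ≫ rightMul A t = rightMul A (s * t) := by
  ext p <;> simp [mul_assoc]

lemma rightMul_one (A : FreeAct S) : rightMul A 1 = 𝟙 A := by
  ext p <;> simp

abbrev regular (S : Type) [Monoid S] : FreeAct S := ⟨PUnit, inferInstance⟩

lemma rightMul_regular_injective :
    Function.Injective (rightMul (regular S) : S → (regular S ⟶ regular S)) := by
  intro s t h
  simpa using congrArg (fun f => (f.1 (1, PUnit.unit)).1) h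

lemma eq_rightMul (f : regular S ⟶ regular S) :
    f = rightMul (regular S) (f.1 (1, PUnit.unit)).1 := by
  ext p; simp [apply_eq f p.1 p.2]

def endRegularEquiv (S : Type) [Monoid S] : Sᵐᵒᵖ ≃* End (regular S) where
  toFun s := rightMul (regular S) s.unop
  invFun f := MulOpposite.op (f.1 (1, PUnit.unit)).1
  left_inv s := by simp
  right_inv f := (eq_rightMul f).symm
  map_mul' s t := (rightMul_comp_rightMul _ t.unop s.unop).symm

def homRegularEquiv (B : FreeAct S) : (regular S ⟶ B) ≃ S × B.X where
  toFun f := f.1 (1, PUnit.unit)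
  invFun q := ⟨fun p => (p.1 * q.1, q.2), fun _ _ => by simp [mul_assoc]⟩
  left_inv f := by ext p <;> simp [apply_eq f p.1 p.2]
  right_inv q := by simp

lemma bijective_of_bijective_comp {A B : FreeAct S} (f : A ⟶ B)
    (hf : Function.Bijective fun g : regular S ⟶ A => g ≫ f) : Function.Bijective f.1 := by
  have hcomp : f.1 = homRegularEquiv B ∘ (fun g => g ≫ f) ∘ (homRegularEquiv A).symm := by
    funext p
    simp [homRegularEquiv]
  rw [hcomp]
  exact (homRegularEquiv B).bijective.comp (hf.comp (homRegularEquiv A).symm.bijective)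

def gen (A : FreeAct S) (x : A.X) : regular S ⟶ A := ⟨fun p => (p.1, x), fun _ _ => rfl⟩

@[simp] lemma gen_apply (A : FreeAct S) (x : A.X) (p : S × PUnit) : (gen A x).1 p = (p.1, x) :=
  rfl

lemma gen_regular : gen (regular S) PUnit.unit = 𝟙 (regular S) := rfl

lemma gen_comp {A B : FreeAct S} (f : A ⟶ B) (x : A.X) :
    gen A x ≫ f = rightMul (regular S) (f.1 (1, x)).1 ≫ gen B (f.1 (1, x)).2 := by
  ext p <;> simp [apply_eq f p.1 x]

lemma hom_ext_gen {A B : FreeAct S} {f g : A ⟶ B} (h : ∀ x, gen A x ≫ f = gen A x ≫ g) :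
    f = g := by
  apply Subtype.ext
  funext ⟨t, x⟩
  exact congrArg (fun k => k.1 (t, PUnit.unit)) (h x)

def collapse (B : FreeAct S) : B ⟶ regular S := ⟨fun p => (p.1, PUnit.unit), fun _ _ => rfl⟩

def retractOfGen (B : FreeAct S) (x : B.X) : Retract (regular S) B :=
  ⟨gen B x, collapse B, rfl⟩

lemma nonempty_iso_regular_of_retract {B : FreeAct S} (R : Retract B (regular S)) :
    Nonempty (regular S ≅ B) := by
  let y₀ := (R.r.1 (1, PUnit.unit)).2
  have hy₀ : ∀ y, y = y₀ := fun y => by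
    have h := congrArg (fun f => (f.1 (1, y)).2) R.retract
    rw [comp_apply, apply_eq R.r] at h
    exact h.symm
  exact ⟨isoOfEquiv ⟨fun _ => y₀, fun _ => PUnit.unit, fun _ => rfl, fun y => (hy₀ y).symm⟩⟩

/-- Applies `σ` to the coefficients of morphisms: a generator sent to `(a, y)` by `f` is sent to
`(σ a, y)` by `(twist σ).map f`. -/
abbrev twist (σ : MulAut S) : FreeAct S ⥤ FreeAct S where
  obj A := A
  map f := ⟨fun p => (p.1 * σ (f.1 (1, p.2)).1, (f.1 (1, p.2)).2), fun _ _ => by simp [mul_assoc]⟩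
  map_id _ := by ext p <;> simp
  map_comp f g := by
    ext p <;> simp only [comp_apply] <;> rw [apply_eq g]
    simp [mul_assoc]

lemma twist_map_gen (σ : MulAut S) (A : FreeAct S) (x : A.X) :
    (twist σ).map (gen A x) = gen A x := by
  ext p <;> simp

lemma twist_map_rightMul (σ : MulAut S) (A : FreeAct S) (s : S) :
    (twist σ).map (rightMul A s) = rightMul A (σ s) := by
  ext p <;> simp

lemma twist_comp_twist (σ τ : MulAut S) : twist σ ⋙ twist τ = twist (τ * σ) :=
  CategoryTheory.Functor.ext (fun _ => rfl) fun _ _ f => by ext p <;> simp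

lemma twist_one : twist (1 : MulAut S) = 𝟭 (FreeAct S) :=
  CategoryTheory.Functor.ext (fun _ => rfl) fun _ _ f => by ext ⟨t, x⟩ <;> simp [apply_eq f t x]

variable (S) in
def twistHom : MulAut S →* CatAut (FreeAct S) where
  toFun σ := ⟨twist σ⁻¹, twist σ, by rw [twist_comp_twist, mul_inv_cancel, twist_one],
    by rw [twist_comp_twist, inv_mul_cancel, twist_one]⟩
  map_one' := CatAut.ext (by simp [twist_one, CatAut.one_toFunctor]) twist_one
  map_mul' σ τ := CatAut.ext (by simp [CatAut.mul_toFunctor, twist_comp_twist])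
    (twist_comp_twist τ σ).symm

lemma twistHom_toFunctor (σ : MulAut S) : (twistHom S σ).toFunctor = twist σ⁻¹ := rfl

lemma twist_map_bijective (σ : MulAut S) (A B : FreeAct S) :
    Function.Bijective ((twist σ).map : (A ⟶ B) → (A ⟶ B)) :=
  (twistHom S σ).toEquivalence.symm.fullyFaithfulFunctor.map_bijective A B

lemma nonempty_twist_iso_id_iff (σ : MulAut S) :
    Nonempty (twist σ ≅ 𝟭 (FreeAct S)) ↔ σ ∈ innerMonSubgroup S := by
  constructor
  · rintro ⟨e⟩
    let u := ((e.hom.app (regular S)).1 (1, PUnit.unit)).1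
    let v := ((e.inv.app (regular S)).1 (1, PUnit.unit)).1
    have hu : e.hom.app (regular S) = rightMul (regular S) u := eq_rightMul _
    have hv : e.inv.app (regular S) = rightMul (regular S) v := eq_rightMul _
    have huv : u * v = 1 := rightMul_regular_injective <| by
      rw [← rightMul_comp_rightMul, ← hu, ← hv, e.hom_inv_id_app, rightMul_one]
    have hvu : v * u = 1 := rightMul_regular_injective <| by
      rw [← rightMul_comp_rightMul, ← hu, ← hv, e.inv_hom_id_app, rightMul_one]; rfl
    have hconj : ∀ c, σ c * u = u * c := fun c => rightMul_regular_injective <| by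
      have h := e.hom.naturality (rightMul (regular S) c)
      rwa [twist_map_rightMul, hu, Functor.id_map, rightMul_comp_rightMul,
        rightMul_comp_rightMul] at h
    refine ⟨⟨u, v, huv, hvu⟩, MulEquiv.ext fun c => ?_⟩
    change u * c * v = σ c
    rw [← hconj, mul_assoc, huv, mul_one]
  · rintro ⟨u, rfl⟩
    refine ⟨NatIso.ofComponents (fun A => ⟨rightMul A u, rightMul A ↑u⁻¹, ?_, ?_⟩) ?_⟩
    · simp [rightMul_comp_rightMul, rightMul_one]
    · simp [rightMul_comp_rightMul, rightMul_one]
    · intro A B f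
      ext ⟨t, x⟩ <;> simp [conjHom, conjUnit, apply_eq f (t * u) x, mul_assoc]

section Autoequivalence

variable (e : FreeAct S ≌ FreeAct S)

lemma nonempty_iso_functor_obj_regular : Nonempty (regular S ≅ e.functor.obj (regular S)) := by
  let x := ((e.toAdjunction.homEquiv (regular S) (regular S) (collapse _)).1 (1, PUnit.unit)).2
  exact nonempty_iso_regular_of_retract
    (((retractOfGen _ x).map e.functor).trans (.ofIso (e.counitIso.app _)))

variable {e} (i : regular S ≅ e.functor.obj (regular S))

noncomputable def inducedMulAut : MulAut S :=
  MulEquiv.unop ((endRegularEquiv S).trans <| (e.fullyFaithfulFunctor.mulEquivEnd _).trans <|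
    i.symm.conj.trans (endRegularEquiv S).symm)

lemma hom_comp_map_rightMul (s : S) :
    i.hom ≫ e.functor.map (rightMul _ s) = rightMul _ (inducedMulAut i s) ≫ i.hom := by
  have h : rightMul _ (inducedMulAut i s) = i.hom ≫ e.functor.map (rightMul _ s) ≫ i.inv :=
    (endRegularEquiv S).apply_symm_apply _
  simp [h]

def twistToFunctorApp (A : FreeAct S) : A ⟶ e.functor.obj A :=
  ⟨fun p => (i.hom ≫ e.functor.map (gen A p.2)).1 (p.1, PUnit.unit),
    fun s p => (i.hom ≫ e.functor.map (gen A p.2)).2 s (p.1, PUnit.unit)⟩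

lemma gen_comp_twistToFunctorApp (A : FreeAct S) (x : A.X) :
    gen A x ≫ twistToFunctorApp i A = i.hom ≫ e.functor.map (gen A x) :=
  rfl

def twistToFunctor : twist (inducedMulAut i) ⟶ e.functor where
  app := twistToFunctorApp i
  naturality A B f := hom_ext_gen fun x => by
    calc gen A x ≫ (twist (inducedMulAut i)).map f ≫ twistToFunctorApp i B
        = rightMul _ (inducedMulAut i (f.1 (1, x)).1) ≫ gen B (f.1 (1, x)).2 ≫
            twistToFunctorApp i B := by
          rw [← Category.assoc, ← twist_map_gen, ← Functor.map_comp, gen_comp,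
            Functor.map_comp, twist_map_rightMul, twist_map_gen, Category.assoc]
      _ = i.hom ≫ e.functor.map (gen A x ≫ f) := by
          rw [gen_comp_twistToFunctorApp, ← Category.assoc, ← hom_comp_map_rightMul,
            Category.assoc, ← Functor.map_comp, ← gen_comp]
      _ = gen A x ≫ twistToFunctorApp i A ≫ e.functor.map f := by
          rw [← Category.assoc, gen_comp_twistToFunctorApp, Functor.map_comp, Category.assoc]

lemma twistToFunctor_app_regular : (twistToFunctor i).app (regular S) = i.hom :=
  hom_ext_gen fun x => by
    change gen _ x ≫ twistToFunctorApp i _ = _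
    rw [gen_comp_twistToFunctorApp, gen_regular, e.functor.map_id, Category.comp_id,
      Category.id_comp]

instance (A : FreeAct S) : IsIso ((twistToFunctor i).app A) := by
  refine isIso_of_bijective _ (bijective_of_bijective_comp _ ?_)
  have h : (fun g => g ≫ (twistToFunctor i).app A) ∘ (twist (inducedMulAut i)).map =
      i.symm.homFromEquiv ∘ e.functor.map := by
    funext g
    simp [(twistToFunctor i).naturality g, twistToFunctor_app_regular]
  rw [← Function.Bijective.of_comp_iff _ (twist_map_bijective _ _ _), h]
  exact i.symm.homFromEquiv.bijective.comp (e.fullyFaithfulFunctor.map_bijective _ _)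

end Autoequivalence

lemma exists_nonempty_twist_iso (e : FreeAct S ≌ FreeAct S) :
    ∃ σ : MulAut S, Nonempty (twist σ ≅ e.functor) := by
  obtain ⟨i⟩ := nonempty_iso_functor_obj_regular e
  exact ⟨inducedMulAut i, ⟨NatIso.ofComponents (fun A => asIso ((twistToFunctor i).app A))
    fun f => (twistToFunctor i).naturality f⟩⟩

end FreeAct

/-- **Theorem 10.** For any monoid `S`, the group
`Out(_S𝒜⁰) = Aut(_S𝒜⁰)/Int(_S𝒜⁰)` of outer automorphisms of the category `_S𝒜⁰` of
finitely generated free left `S`-acts is isomorphic to the group `Out(S) = Aut(S)/Int(S)`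
of outer automorphisms of the monoid `S`. -/
theorem out_category_iso_out_monoid (S : Type) [Monoid S] :
    Nonempty ((CatAut (FreeAct S) ⧸ CatAut.innerSubgroup (FreeAct S)) ≃*
      (MulAut S ⧸ innerMonSubgroup S)) := by
  let φ := (QuotientGroup.mk' (CatAut.innerSubgroup (FreeAct S))).comp (FreeAct.twistHom S)
  have hker : φ.ker = innerMonSubgroup S := by
    ext σ
    rw [MonoidHom.mem_ker, MonoidHom.comp_apply, QuotientGroup.mk'_apply,
      QuotientGroup.eq_one_iff, ← inv_mem_iff, ← FreeAct.nonempty_twist_iso_id_iff]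
    rfl
  have hsurj : Function.Surjective φ := by
    rintro ⟨a⟩
    obtain ⟨σ, ⟨e⟩⟩ := FreeAct.exists_nonempty_twist_iso a.toEquivalence
    refine ⟨σ⁻¹, CatAut.mk_eq_mk_of_iso ?_⟩
    rw [FreeAct.twistHom_toFunctor, inv_inv]
    exact e
  exact ⟨((QuotientGroup.quotientMulEquivOfEq hker.symm).trans
    (QuotientGroup.quotientKerEquivOfSurjective φ hsurj)).symm⟩
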